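/- arXiv:2510.26939 — 3 statements merged into one kernel-verified Lean document; each statement's English description precedes it below -/
import Mathlib

section
/- For every positive integer n, the largest natural number s such that s² divides n is equal to the number of pairs (x, y) of natural numbers with 0 ≤ x ≤ n−1, 0 ≤ y ≤ n−1 and x² = n·y. -/
/-- `chi n` is the largest natural number `s` such that `s ^ 2` divides `n`
(for `n ≥ 1`, since any such `s` satisfies `s ≤ n`). -/
def chi (n : ℕ) : ℕ := Nat.findGreatest (fun s => s ^ 2 ∣ n) n

/-! Write `n = s ^ 2 * m` with `s = chi n`; maximality of `s` makes `m` squarefree. For squarefree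
`m`, `s ^ 2 * m ∣ x ^ 2` holds exactly when `s * m ∣ x`, so the solutions of `x ^ 2 = n * y` with
`x, y < n` are the pairs `(k * s * m, k ^ 2 * m)` with `k < s`. -/

namespace Nat

theorem dvd_of_sq_dvd_mul_sq_of_squarefree {m a b : ℕ} (hm : Squarefree m)
    (h : a ^ 2 ∣ m * b ^ 2) : a ∣ b := by
  obtain ⟨a', b', hcop, ha, hb⟩ := exists_coprime a b
  set g := gcd a b
  rcases Nat.eq_zero_or_pos g with hg | hg
  · simp [ha, hb, hg]
  have h' : a' ^ 2 ∣ m * b' ^ 2 := by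
    rw [ha, hb, mul_pow, mul_pow, ← mul_assoc] at h
    exact Nat.dvd_of_mul_dvd_mul_right (by positivity) h
  have ha'm : a' * a' ∣ m := by
    rw [← sq]
    exact (hcop.pow 2 2).dvd_of_dvd_mul_right h'
  have ha' : a' = 1 := Nat.isUnit_iff.mp (hm a' ha'm)
  rw [ha, ha', one_mul, hb]
  exact dvd_mul_left g b'

theorem sq_mul_dvd_sq_iff_mul_dvd {m s x : ℕ} (hm : Squarefree m) :
    s ^ 2 * m ∣ x ^ 2 ↔ s * m ∣ x := by
  constructor
  · intro h
    refine dvd_of_sq_dvd_mul_sq_of_squarefree hm ?_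
    calc (s * m) ^ 2 = m * (s ^ 2 * m) := by ring
      _ ∣ m * x ^ 2 := mul_dvd_mul_left m h
  · rintro ⟨k, rfl⟩
    exact ⟨m * k ^ 2, by ring⟩

end Nat

theorem card_filter_sq_eq_mul_of_eq_sq_mul_squarefree {n s m : ℕ} (hn : n = s ^ 2 * m) (hm : Squarefree m) :
    ((Finset.range n ×ˢ Finset.range n).filter fun p => p.1 ^ 2 = n * p.2).card = s := by
  have hm0 : 0 < m := Nat.pos_of_ne_zero hm.ne_zero
  have hsm : ∀ x : ℕ, n ∣ x ^ 2 ↔ s * m ∣ x := fun x => hn ▸ Nat.sq_mul_dvd_sq_iff_mul_dvd hm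
  rcases Nat.eq_zero_or_pos s with rfl | hs
  · simp [hn]
  have hf : Function.Injective fun k => (k * (s * m), k ^ 2 * m) := fun k l hkl =>
    Nat.eq_of_mul_eq_mul_right (by positivity) (congrArg Prod.fst hkl)
  suffices (Finset.range n ×ˢ Finset.range n).filter (fun p => p.1 ^ 2 = n * p.2)
      = (Finset.range s).image fun k => (k * (s * m), k ^ 2 * m) by
    rw [this, Finset.card_image_of_injective _ hf, Finset.card_range]
  ext ⟨x, y⟩
  simp only [Finset.mem_filter, Finset.mem_product, Finset.mem_range, Finset.mem_image,
    Prod.mk.injEq]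
  constructor
  · rintro ⟨⟨hx, -⟩, hxy⟩
    obtain ⟨k, rfl⟩ := (hsm x).mp ⟨y, hxy⟩
    refine ⟨k, ?_, mul_comm _ _, ?_⟩
    · rw [hn] at hx
      nlinarith
    · refine Nat.eq_of_mul_eq_mul_left (by omega : 0 < n) ?_
      rw [← hxy, hn]
      ring
  · rintro ⟨k, hk, rfl, rfl⟩
    refine ⟨⟨?_, ?_⟩, by rw [hn]; ring⟩
    · rw [hn, sq, mul_assoc]
      exact Nat.mul_lt_mul_of_pos_right hk (by positivity)
    · rw [hn]
      exact Nat.mul_lt_mul_of_pos_right (Nat.pow_lt_pow_left hk two_ne_zero) hm0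

theorem chi_sq_dvd {n : ℕ} (hn : 0 < n) : chi n ^ 2 ∣ n :=
  Nat.findGreatest_spec (P := fun s => s ^ 2 ∣ n) (m := 1) hn (by simp)

theorem le_chi_of_sq_dvd {n t : ℕ} (hn : 0 < n) (ht : t ^ 2 ∣ n) : t ≤ chi n :=
  Nat.le_findGreatest ((Nat.le_self_pow two_ne_zero t).trans (Nat.le_of_dvd hn ht)) ht

theorem squarefree_div_chi_sq {n : ℕ} (hn : 0 < n) : Squarefree (n / chi n ^ 2) := by
  rintro p ⟨q, hq⟩
  have hn' : n = (chi n * p) ^ 2 * q :=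
    calc n = chi n ^ 2 * (n / chi n ^ 2) := (Nat.mul_div_cancel' (chi_sq_dvd hn)).symm
      _ = (chi n * p) ^ 2 * q := by rw [hq]; ring
  have hchi : 0 < chi n := Nat.le_findGreatest (by omega) (by simp)
  have hle : chi n * p ≤ chi n * 1 := by
    simpa using le_chi_of_sq_dvd hn (Dvd.intro q hn'.symm)
  have hp1 : p ≤ 1 := Nat.le_of_mul_le_mul_left hle hchi
  have hp0 : p ≠ 0 := by
    rintro rfl
    simp at hn'
    omega
  exact Nat.isUnit_iff.mpr (by omega)

theorem stmt_4 (n : ℕ) (hn : 0 < n) :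
    chi n =
      ((Finset.range n ×ˢ Finset.range n).filter fun p => p.1 ^ 2 = n * p.2).card :=
  (card_filter_sq_eq_mul_of_eq_sq_mul_squarefree (Nat.mul_div_cancel' (chi_sq_dvd hn)).symm
    (squarefree_div_chi_sq hn)).symm
end

section
/- Let n ≥ 2 be a natural number and let P be the greatest prime divisor of n. Then the number of 5-tuples (a, b, c, d, e) of natural numbers satisfying the system (a+b+2)·c = n, (a+b+1)! + 1 = d·(a+b+2), and ((a+b+2)!)^n = n·e is exactly P − 1. -/
/-!
Put `m = a + b + 2`. The first equation says `m ∣ n`, and by Wilson's theorem the second says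
that `m` is prime. Since `n ∣ (m!)^n` exactly when every prime factor of `n` is at most `m`,
the third equation forces `m ≥ P`, so the prime divisor `m` of `n` equals `P`. Conversely,
`m = P` makes all three equations solvable, with `c`, `d`, `e` uniquely determined, so the
solutions correspond to the `P - 1` pairs `(a, b)` with `a + b = P - 2`.
-/

open Nat Finset

theorem Nat.prime_iff_dvd_factorial_add_one (k : ℕ) : (k + 2).Prime ↔ k + 2 ∣ (k + 1)! + 1 := by
  rw [prime_iff_fac_equiv_neg_one (by omega), ← ZMod.natCast_eq_zero_iff]
  push_cast
  simp [eq_neg_iff_add_eq_zero]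

theorem Nat.dvd_factorial_pow_self_iff {n m : ℕ} (hn : n ≠ 0) :
    n ∣ m ! ^ n ↔ ∀ p, p.Prime → p ∣ n → p ≤ m := by
  rw [dvd_pow_self_iff hn (factorial_ne_zero m)]
  simp +contextual [Finset.subset_iff, hn, Prime.dvd_factorial, factorial_ne_zero]

section GreatestPrimeFactor

variable {n P : ℕ} (hn : n ≠ 0) (hP : P.Prime) (hPn : P ∣ n)
  (hPmax : ∀ q, q.Prime → q ∣ n → q ≤ P)
include hn hP hPn hPmax

theorem eq_of_prime_dvd_of_dvd_factorial_pow {m : ℕ} (hm : m.Prime) (hmn : m ∣ n)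
    (hnm : n ∣ m ! ^ n) : m = P :=
  le_antisymm (hPmax m hm hmn) ((dvd_factorial_pow_self_iff hn).mp hnm P hP hPn)

theorem factorial_system_iff (k c d e : ℕ) :
    ((k + 2) * c = n ∧ (k + 1)! + 1 = d * (k + 2) ∧ (k + 2)! ^ n = n * e) ↔
      k + 2 = P ∧ c = n / P ∧ d = ((P - 1)! + 1) / P ∧ e = P ! ^ n / n := by
  constructor
  · rintro ⟨hc, hd, he⟩
    obtain rfl : k + 2 = P := eq_of_prime_dvd_of_dvd_factorial_pow hn hP hPn hPmax
      ((prime_iff_dvd_factorial_add_one k).mpr ⟨d, by rw [hd, mul_comm]⟩) ⟨c, hc.symm⟩ ⟨e, he⟩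
    refine ⟨rfl, ?_, ?_, ?_⟩
    · rw [← hc, Nat.mul_div_cancel_left _ (by omega)]
    · rw [show k + 2 - 1 = k + 1 from rfl, hd, Nat.mul_div_cancel _ (by omega)]
    · rw [he, Nat.mul_div_cancel_left _ (Nat.pos_of_ne_zero hn)]
  · rintro ⟨rfl, rfl, rfl, rfl⟩
    refine ⟨Nat.mul_div_cancel' hPn, ?_, (Nat.mul_div_cancel' ?_).symm⟩
    · rw [show k + 2 - 1 = k + 1 from rfl,
        Nat.div_mul_cancel ((prime_iff_dvd_factorial_add_one k).mp hP)]
    · exact (dvd_factorial_pow_self_iff hn).mpr hPmax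

end GreatestPrimeFactor

theorem stmt_12 (n : ℕ) (hn : 2 ≤ n) (P : ℕ) (hP : P.Prime) (hPn : P ∣ n)
    (hPmax : ∀ q, q.Prime → q ∣ n → q ≤ P) :
    Nat.card {t : ℕ × ℕ × ℕ × ℕ × ℕ |
      (t.1 + t.2.1 + 2) * t.2.2.1 = n ∧
      Nat.factorial (t.1 + t.2.1 + 1) + 1 = t.2.2.2.1 * (t.1 + t.2.1 + 2) ∧
      (Nat.factorial (t.1 + t.2.1 + 2)) ^ n = n * t.2.2.2.2} = P - 1 := by
  set solution : ℕ × ℕ → ℕ × ℕ × ℕ × ℕ × ℕ :=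
    fun ab => (ab.1, ab.2, n / P, ((P - 1)! + 1) / P, P ! ^ n / n)
  have solution_injective : Function.Injective solution := fun x y h =>
    Prod.ext (congrArg (·.1) h) (congrArg (·.2.1) h)
  have hP2 := hP.two_le
  have hset : {t : ℕ × ℕ × ℕ × ℕ × ℕ |
      (t.1 + t.2.1 + 2) * t.2.2.1 = n ∧
      Nat.factorial (t.1 + t.2.1 + 1) + 1 = t.2.2.2.1 * (t.1 + t.2.1 + 2) ∧
      (Nat.factorial (t.1 + t.2.1 + 2)) ^ n = n * t.2.2.2.2} =
      ↑((antidiagonal (P - 2)).image solution) := by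
    ext ⟨a, b, c, d, e⟩
    rw [Set.mem_ofPred_eq, factorial_system_iff (by omega) hP hPn hPmax]
    simp only [coe_image, Set.mem_image, SetLike.mem_coe, HasAntidiagonal.mem_antidiagonal,
      Prod.mk.injEq, Prod.exists, ↓existsAndEq, true_and, solution]
    omega
  rw [hset, Nat.card_coe_set_eq, Set.ncard_coe_finset,
    card_image_of_injective _ solution_injective, Nat.card_antidiagonal]
  omega
end

section
/- Let n > 1 be a composite natural number. Then q = (2 ∸ χ(n)) · gcd(n, ⌊n^(1/ω(n))⌋!) + (1 ∸ (2 ∸ χ(n))) · χ(n) is a non-trivial divisor of n, i.e., q divides n and 1 < q < n. -/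
/-- `iroot m n` is the greatest natural number `r` with `r ^ m ≤ n`
(for `m ≥ 1` and `n ≥ 1`, since any such `r` satisfies `r ≤ n`). -/
def iroot (m n : ℕ) : ℕ := Nat.findGreatest (fun r => r ^ m ≤ n) n

section Chi

variable {n : ℕ}

theorem sq_chi_dvd (n : ℕ) : chi n ^ 2 ∣ n := by
  rcases eq_or_ne n 0 with rfl | hn
  · simp
  · exact Nat.findGreatest_spec (P := fun s => s ^ 2 ∣ n) (m := 1) (Nat.one_le_iff_ne_zero.2 hn)
      (by simp)

theorem le_chi {s : ℕ} (hn : n ≠ 0) (hs : s ^ 2 ∣ n) : s ≤ chi n :=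
  Nat.le_findGreatest ((Nat.le_self_pow two_ne_zero s).trans (Nat.le_of_dvd (by omega) hs)) hs

theorem one_le_chi (hn : n ≠ 0) : 1 ≤ chi n :=
  le_chi hn (by simp)

theorem chi_lt_self (h : 2 ≤ chi n) : chi n < n := by
  have hn : n ≠ 0 := by rintro rfl; simp [chi] at h
  calc chi n < chi n ^ 2 := lt_self_pow₀ (by omega) one_lt_two
    _ ≤ n := Nat.le_of_dvd (by omega) (sq_chi_dvd n)

theorem squarefree_of_chi_eq_one (h : chi n = 1) : Squarefree n := by
  have hn : n ≠ 0 := by rintro rfl; simp [chi] at h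
  intro x hx
  have hx0 : x ≠ 0 := by rintro rfl; simp_all
  have hx1 : x ≤ 1 := h ▸ le_chi hn (by rwa [sq])
  exact Nat.isUnit_iff.2 (by omega)

end Chi

section Iroot

variable {m n r : ℕ}

theorem iroot_pow_le (m : ℕ) (hn : n ≠ 0) : iroot m n ^ m ≤ n :=
  Nat.findGreatest_spec (P := fun r => r ^ m ≤ n) (m := 1) (Nat.one_le_iff_ne_zero.2 hn)
    (by simpa using Nat.one_le_iff_ne_zero.2 hn)

theorem le_iroot (hm : m ≠ 0) (h : r ^ m ≤ n) : r ≤ iroot m n :=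
  Nat.le_findGreatest ((Nat.le_self_pow hm r).trans h) h

end Iroot

theorem Finset.prod_lt_pow_card_of_nontrivial {s : Finset ℕ} {r : ℕ} (hs : s.Nontrivial)
    (hpos : ∀ p ∈ s, 0 < p) (hle : ∀ p ∈ s, p ≤ r) : ∏ p ∈ s, p < r ^ s.card := by
  obtain ⟨a, ha, b, hb, hab⟩ := hs
  have hlt : ∃ p ∈ s, p < r := by
    rcases eq_or_ne a r with rfl | har
    · exact ⟨b, hb, (hle b hb).lt_of_ne hab.symm⟩
    · exact ⟨a, ha, (hle a ha).lt_of_ne har⟩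
  simpa using Finset.prod_lt_prod hpos hle hlt

section GcdFactorialIroot

variable {n : ℕ}

theorem minFac_le_iroot_card_primeFactors (hn : 1 < n) :
    n.minFac ≤ iroot n.primeFactors.card n := by
  refine le_iroot (Nat.nonempty_primeFactors.2 hn).card_pos.ne' ?_
  calc n.minFac ^ n.primeFactors.card ≤ ∏ p ∈ n.primeFactors, p :=
        Finset.pow_card_le_prod _ _ _ fun p hp =>
          Nat.minFac_le_of_dvd (Nat.prime_of_mem_primeFactors hp).two_le
            (Nat.dvd_of_mem_primeFactors hp)
    _ ≤ n := Nat.le_of_dvd (by omega) (Nat.prod_primeFactors_dvd n)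

theorem one_lt_gcd_factorial_iroot (hn : 1 < n) :
    1 < Nat.gcd n (Nat.factorial (iroot n.primeFactors.card n)) := by
  have hdvd : n.minFac ∣ Nat.gcd n (Nat.factorial (iroot n.primeFactors.card n)) :=
    Nat.dvd_gcd n.minFac_dvd (Nat.dvd_factorial n.minFac_pos (minFac_le_iroot_card_primeFactors hn))
  exact (Nat.minFac_prime hn.ne').one_lt.trans_le
    (Nat.le_of_dvd (Nat.gcd_pos_of_pos_left _ (by omega)) hdvd)

theorem gcd_factorial_iroot_lt (hsq : Squarefree n) (hn : 1 < n) (hnp : ¬ n.Prime) :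
    Nat.gcd n (Nat.factorial (iroot n.primeFactors.card n)) < n := by
  set r := iroot n.primeFactors.card n
  refine (Nat.le_of_dvd (by omega) (Nat.gcd_dvd_left _ _)).lt_of_ne fun hgcd => ?_
  have hdvd : n ∣ r.factorial := hgcd ▸ Nat.gcd_dvd_right _ _
  have hnt : n.primeFactors.Nontrivial :=
    (Nat.not_isPrimePow_iff_nontrivial_of_two_le hn).1 fun hpp =>
      hnp (Nat.squarefree_and_prime_pow_iff_prime.1 ⟨hsq, hpp⟩)
  have hle : ∀ p ∈ n.primeFactors, p ≤ r := fun p hp =>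
    (Nat.prime_of_mem_primeFactors hp).dvd_factorial.1 ((Nat.dvd_of_mem_primeFactors hp).trans hdvd)
  have hlt := Finset.prod_lt_pow_card_of_nontrivial hnt
    (fun p hp => (Nat.prime_of_mem_primeFactors hp).pos) hle
  rw [Nat.prod_primeFactors_of_squarefree hsq] at hlt
  exact (iroot_pow_le _ (by omega)).not_gt hlt

end GcdFactorialIroot

theorem stmt_18 (n : ℕ) (hn : 1 < n) (hcomp : ¬ n.Prime) :
    (2 - chi n) * Nat.gcd n (Nat.factorial (iroot n.primeFactors.card n)) +
        (1 - (2 - chi n)) * chi n ∣ n ∧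
    1 < (2 - chi n) * Nat.gcd n (Nat.factorial (iroot n.primeFactors.card n)) +
        (1 - (2 - chi n)) * chi n ∧
    (2 - chi n) * Nat.gcd n (Nat.factorial (iroot n.primeFactors.card n)) +
        (1 - (2 - chi n)) * chi n < n := by
  rcases (one_le_chi (n := n) (by omega)).eq_or_lt with hchi | hchi
  · have hsq := squarefree_of_chi_eq_one hchi.symm
    rw [← hchi]
    simpa using ⟨Nat.gcd_dvd_left _ _, one_lt_gcd_factorial_iroot hn,
      gcd_factorial_iroot_lt hsq hn hcomp⟩
  · have hchi_dvd : chi n ∣ n := (dvd_pow_self _ two_ne_zero).trans (sq_chi_dvd n)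
    rw [show 2 - chi n = 0 by omega]
    simpa using ⟨hchi_dvd, hchi, chi_lt_self hchi⟩
end
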